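/- Objective correspondence of the reduction from OEP to PSP: with the PSP instance φ(G) as constructed (projects a_i, b_i with profits p(a_i) = −l_i, p(b_i) = l_i − c_i), for every prerequisite-closed subset A of projects, the total profit satisfies Σ_{x∈A} p(x) = −T(s_A), where s_A is the induced state assignment and T(s) = Σ_{n_i∈N} 1[s(n_i)=S_c]·c_i + 1[s(n_i)=S_l]·l_i is the workflow run time. In particular, selecting both a_i and b_i contributes −c_i and selecting only a_i contributes −l_i to the profit. -/
import Mathlib


/-- Operator states: compute, load, prune. -/
inductive NodeState where
  | compute
  | load
  | prune
deriving DecidableEq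

/-- `prereq parents p q` : project `p` is a prerequisite of project `q` in the
PSP instance `φ(G)` (projects `aᵢ = Sum.inl i`, `bᵢ = Sum.inr i`):
`aᵢ` is a prerequisite of `bᵢ` for each node `i`, and `aᵢ` is a prerequisite of
`bⱼ` for each edge `(i, j)` (i.e. whenever `i` is a parent of `j`). -/
def prereq {N : Type} [Fintype N] [DecidableEq N] (parents : N → Finset N) :
    N ⊕ N → N ⊕ N → Prop := fun p q =>
  match p, q with
  | Sum.inl i, Sum.inr j => i = j ∨ i ∈ parents j
  | _, _ => False

/-- A prerequisite-closed set of projects. -/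
def PrereqClosed {N : Type} [Fintype N] [DecidableEq N] (parents : N → Finset N)
    (A : Finset (N ⊕ N)) : Prop :=
  ∀ p q : N ⊕ N, prereq parents p q → q ∈ A → p ∈ A

/-- The state assignment induced by a project selection `A`. -/
def inducedState {N : Type} [Fintype N] [DecidableEq N] (A : Finset (N ⊕ N))
    (i : N) : NodeState :=
  if Sum.inl i ∈ A then (if Sum.inr i ∈ A then .compute else .load) else .prune

/-- Profits of the PSP instance `φ(G)`: `p(aᵢ) = -lᵢ` and `p(bᵢ) = lᵢ - cᵢ`. -/
def profit {N : Type} [Fintype N] [DecidableEq N] (l c : N → ℝ) :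
    N ⊕ N → ℝ := fun x =>
  match x with
  | Sum.inl i => -l i
  | Sum.inr i => l i - c i

/-- The workflow run time of a state assignment:
`T(s) = Σᵢ 1[s(nᵢ)=S_c]·cᵢ + 1[s(nᵢ)=S_l]·lᵢ`. -/
def runTime {N : Type} [Fintype N] [DecidableEq N] (l c : N → ℝ)
    (s : N → NodeState) : ℝ :=
  ∑ i, ((if s i = NodeState.compute then c i else 0) +
        (if s i = NodeState.load then l i else 0))

/-- Objective correspondence of the reduction from OEP to PSP:
for every prerequisite-closed subset `A` of projects of `φ(G)`, the total
profit satisfies `Σ_{x∈A} p(x) = -T(s_A)`.  In particular, selecting both `aᵢ`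
and `bᵢ` contributes `-cᵢ`, and selecting only `aᵢ` contributes `-lᵢ`, to the
profit. -/
theorem oep_psp_objective {N : Type} [Fintype N] [DecidableEq N]
    (parents : N → Finset N)
    (acyclic : WellFounded fun i j => i ∈ parents j)
    (l c : N → ℝ)
    (A : Finset (N ⊕ N)) (hA : PrereqClosed parents A) :
    (∑ x ∈ A, profit l c x) = -runTime l c (inducedState A) ∧
    (∀ i : N, profit l c (Sum.inl i) + profit l c (Sum.inr i) = -c i) ∧
    (∀ i : N, profit l c (Sum.inl i) = -l i) := by
  refine ⟨?_, fun i => by simp [profit]; ring, fun i => rfl⟩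
  have hcl : ∀ i : N, Sum.inr i ∈ A → Sum.inl i ∈ A := fun i h =>
    hA _ _ (show prereq parents (Sum.inl i) (Sum.inr i) from Or.inl rfl) h
  rw [show (∑ x ∈ A, profit l c x) = ∑ x, if x ∈ A then profit l c x else 0 by
    rw [Finset.sum_ite_mem, Finset.univ_inter]]
  rw [Fintype.sum_sum_type, runTime, ← Finset.sum_add_distrib, ← Finset.sum_neg_distrib]
  refine Finset.sum_congr rfl fun i _ => ?_
  unfold inducedState profit
  by_cases h1 : Sum.inl i ∈ A <;> by_cases h2 : Sum.inr i ∈ A <;>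
    simp [h1, h2, hcl i] <;> ring_nf <;> simp_all <;> ring
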